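/- arXiv:2210.14989 — 3 statements merged into one kernel-verified Lean document; each statement's English description precedes it below -/
import Mathlib

section
/- Let g : X → X be a measure-preserving transformation of a probability space (X, μ) and let A ⊆ X be measurable. Then liminf_{n→∞} (1/n) ∑_{j=0}^{n-1} μ(g^{-j}A ∩ A) ≥ μ(A)². -/
open MeasureTheory Filter Finset
open scoped ENNReal Topology

section aux

variable {X : Type*} [MeasurableSpace X] {μ : Measure X}

private lemma indC_congr {s t : Set X} (h : s = t) (hs : MeasurableSet s) (hμs : μ s ≠ ∞)
    (ht : MeasurableSet t) (hμt : μ t ≠ ∞) :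
    indicatorConstLp 2 hs hμs (1 : ℝ) = indicatorConstLp 2 ht hμt (1 : ℝ) := by
  subst h; rfl

private lemma inner_indC_indC [IsFiniteMeasure μ] {s t : Set X} (hs : MeasurableSet s)
    (ht : MeasurableSet t) :
    (inner ℝ (indicatorConstLp 2 hs (measure_ne_top μ s) (1 : ℝ))
      (indicatorConstLp 2 ht (measure_ne_top μ t) (1 : ℝ)) : ℝ) = (μ (s ∩ t)).toReal := by
  rw [L2.inner_indicatorConstLp_eq_setIntegral_inner]
  have h1 : ∀ᵐ x ∂μ, x ∈ t → (indicatorConstLp 2 ht (measure_ne_top μ t) (1 : ℝ)) x = 1 :=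
    indicatorConstLp_coeFn_mem
  have h0 : ∀ᵐ x ∂μ, x ∉ t → (indicatorConstLp 2 ht (measure_ne_top μ t) (1 : ℝ)) x = 0 :=
    indicatorConstLp_coeFn_notMem
  have : (∫ x in s, (inner ℝ (1 : ℝ) ((indicatorConstLp 2 ht (measure_ne_top μ t) (1 : ℝ)) x) : ℝ) ∂μ)
      = ∫ x in s, t.indicator (fun _ => (1 : ℝ)) x ∂μ := by
    refine setIntegral_congr_ae hs ?_
    filter_upwards [h1, h0] with x hx1 hx0 _
    by_cases hxt : x ∈ t
    · simp [hx1 hxt, Set.indicator_of_mem hxt]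
    · simp [hx0 hxt, Set.indicator_of_notMem hxt]
  rw [this, setIntegral_indicator ht, setIntegral_const, smul_eq_mul, mul_one, measureReal_def]

end aux

set_option maxHeartbeats 1000000 in
theorem liminf_correlation_ge_sq {X : Type*} [MeasurableSpace X]
    (μ : Measure X) [IsProbabilityMeasure μ] (g : X → X)
    (hg : MeasurePreserving g μ μ) (A : Set X) (hA : MeasurableSet A) :
    atTop.liminf (fun n : ℕ =>
        (1 / (n : ℝ)) * ∑ j ∈ Finset.range n, (μ (g^[j] ⁻¹' A ∩ A)).toReal)
      ≥ (μ A).toReal ^ 2 := by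
  haveI : Fact ((1 : ENNReal) ≤ 2) := ⟨one_le_two⟩
  let T : Lp ℝ 2 μ →L[ℝ] Lp ℝ 2 μ := (Lp.compMeasurePreservingₗᵢ ℝ g hg).toContinuousLinearMap
  have hT : ‖T‖ ≤ 1 := T.opNorm_le_bound zero_le_one fun x => by
    simp [T, one_mul, LinearIsometry.coe_toContinuousLinearMap, LinearIsometry.norm_map]
  -- indicator functions
  have hmeas : ∀ j : ℕ, MeasurableSet (g^[j] ⁻¹' A) := fun j => (hg.iterate j).measurable hA
  let fA : Lp ℝ 2 μ := indicatorConstLp 2 hA (measure_ne_top μ A) (1 : ℝ)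
  let fB : ℕ → Lp ℝ 2 μ := fun j => indicatorConstLp 2 (hmeas j) (measure_ne_top μ _) (1 : ℝ)
  have hTiter : ∀ j : ℕ, T^[j] fA = fB j := by
    intro j
    induction j with
    | zero =>
      simp only [Function.iterate_zero, id_eq]
      rfl
    | succ j ih =>
      rw [Function.iterate_succ_apply', ih]
      show Lp.compMeasurePreserving g hg (fB j) = fB (j + 1)
      rw [Lp.indicatorConstLp_compMeasurePreserving]
      rfl
  -- constant one function
  let oneE : Lp ℝ 2 μ := indicatorConstLp 2 MeasurableSet.univ (measure_ne_top μ _) (1 : ℝ)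
  have hone_fixed : T oneE = oneE := by
    show Lp.compMeasurePreserving g hg oneE = oneE
    rw [Lp.indicatorConstLp_compMeasurePreserving]
    rfl
  set S := T.eqLocus (1 : Lp ℝ 2 μ →L[ℝ] Lp ℝ 2 μ) with hS
  have honeS : oneE ∈ S := by
    rw [hS, LinearMap.mem_eqLocus]
    simpa [ContinuousLinearMap.one_apply] using hone_fixed
  set P : Lp ℝ 2 μ := (S.orthogonalProjectionOnto fA : Lp ℝ 2 μ) with hP
  -- convergence
  have hconv : Tendsto (fun n => birkhoffAverage ℝ T _root_.id n fA) atTop (𝓝 P) :=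
    T.tendsto_birkhoffAverage_orthogonalProjection hT fA
  have hconv2 : Tendsto (fun n => (inner ℝ (birkhoffAverage ℝ T _root_.id n fA) fA : ℝ))
      atTop (𝓝 (inner ℝ P fA : ℝ)) :=
    (Continuous.inner continuous_id continuous_const).continuousAt.tendsto.comp hconv
  have heq : ∀ n : ℕ, (inner ℝ (birkhoffAverage ℝ T _root_.id n fA) fA : ℝ)
      = (1 / (n : ℝ)) * ∑ j ∈ Finset.range n, (μ (g^[j] ⁻¹' A ∩ A)).toReal := by
    intro n
    rw [birkhoffAverage, real_inner_smul_left, birkhoffSum, sum_inner, one_div]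
    congr 1
    refine Finset.sum_congr rfl fun j _ => ?_
    rw [id_eq, hTiter j]
    exact inner_indC_indC (hmeas j) hA
  have hconv3 : Tendsto (fun n : ℕ =>
      (1 / (n : ℝ)) * ∑ j ∈ Finset.range n, (μ (g^[j] ⁻¹' A ∩ A)).toReal)
      atTop (𝓝 (inner ℝ P fA : ℝ)) := by
    simpa only [heq] using hconv2
  rw [ge_iff_le, hconv3.liminf_eq]
  -- now show (μ A).toReal ^ 2 ≤ ⟪P, fA⟫
  have hsub : ∀ w ∈ S, (inner ℝ (fA - P) w : ℝ) = 0 := by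
    rw [hP]
    exact fun w hw => Submodule.starProjection_inner_eq_zero fA w hw
  have hPmem : P ∈ S := by rw [hP]; exact (S.orthogonalProjectionOnto fA).2
  have hPP : (inner ℝ P fA : ℝ) = inner ℝ P P := by
    have h1 : (inner ℝ (fA - P) P : ℝ) = 0 := hsub P hPmem
    rw [inner_sub_left] at h1
    have h2 := real_inner_comm fA P
    linarith
  have hPone : (inner ℝ P oneE : ℝ) = (μ A).toReal := by
    have h0 : (inner ℝ (fA - P) oneE : ℝ) = 0 := hsub oneE honeS
    rw [inner_sub_left] at h0
    have hfA1 : (inner ℝ fA oneE : ℝ) = (μ A).toReal := by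
      have := inner_indC_indC (μ := μ) hA MeasurableSet.univ
      rw [Set.inter_univ] at this
      exact this
    linarith
  have honeone : (inner ℝ oneE oneE : ℝ) = 1 := by
    have := inner_indC_indC (μ := μ) MeasurableSet.univ MeasurableSet.univ
    rw [Set.inter_univ] at this
    rw [this, measure_univ, ENNReal.toReal_one]
  have hCS : (inner ℝ P oneE : ℝ) * inner ℝ P oneE ≤ (inner ℝ P P : ℝ) * inner ℝ oneE oneE :=
    real_inner_mul_inner_self_le P oneE
  rw [hPone, honeone, mul_one] at hCS
  calc (μ A).toReal ^ 2 = (μ A).toReal * (μ A).toReal := sq _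
  _ ≤ (inner ℝ P P : ℝ) := hCS
  _ = (inner ℝ P fA : ℝ) := hPP.symm
end

section
/- Let g : X → X be a measure-preserving transformation of a probability space (X, μ) and let A ⊆ X have μ(A) > 0. For N, n ∈ ℕ define A_N^n = {x ∈ A : g^j(x) ∉ A for all j with n−N ≤ j ≤ n}. Then for every ε > 0 there exists N ∈ ℕ such that μ(A_N^n) < ε for every n > N. -/
/-!
Write `C N = avoidUpTo g A N` for the points whose iterates at times `0, …, N` avoid `A`. Both
`A ∩ g^{-k} (C N)` and `C (N + k)` lie in `g^{-k} (C N)`, and they are disjoint because `C (N + k)`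
misses `A`; as `g` preserves `μ`, the first has measure at most `μ (C N) - μ (C (N + k))`. The
finite antitone sequence `μ (C N)` converges, so these differences are uniformly small once `N` is
large, and the set in the theorem is contained in `A ∩ g^{-(n - N)} (C N)`.
-/

open MeasureTheory Filter Topology

open scoped ENNReal

theorem ENNReal.exists_forall_sub_lt_of_antitone {a : ℕ → ℝ≥0∞} (ha : Antitone a)
    (h₀ : a 0 ≠ ∞) {ε : ℝ≥0∞} (hε : 0 < ε) : ∃ N, ∀ m, N ≤ m → a N - a m < ε := by
  have hlim : Tendsto (fun n ↦ a n - ⨅ m, a m) atTop (𝓝 0) := by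
    simpa using ENNReal.Tendsto.sub (tendsto_atTop_iInf ha) tendsto_const_nhds
      (Or.inr (ne_top_of_le_ne_top h₀ (iInf_le a 0)))
  obtain ⟨N, hN⟩ := (hlim.eventually_lt_const hε).exists
  exact ⟨N, fun m _ ↦ (tsub_le_tsub_left (iInf_le a m) _).trans_lt hN⟩

namespace Function

variable {X : Type*} (g : X → X) (A : Set X)

def avoidUpTo (N : ℕ) : Set X := {x | ∀ j ≤ N, g^[j] x ∉ A}

variable {g A}

theorem antitone_avoidUpTo : Antitone (avoidUpTo g A) :=
  fun _ _ hMN _ hx j hj ↦ hx j (hj.trans hMN)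

theorem disjoint_avoidUpTo (N : ℕ) : Disjoint A (avoidUpTo g A N) :=
  Set.disjoint_left.mpr fun _ hx hC ↦ hC 0 N.zero_le hx

theorem avoidUpTo_add_subset_preimage (N k : ℕ) :
    avoidUpTo g A (N + k) ⊆ g^[k] ⁻¹' avoidUpTo g A N := fun x hx i hi ↦ by
  rw [← iterate_add_apply]
  exact hx (i + k) (by omega)

theorem measurableSet_avoidUpTo [MeasurableSpace X] (hg : Measurable g) (hA : MeasurableSet A)
    (N : ℕ) : MeasurableSet (avoidUpTo g A N) := by
  simp only [avoidUpTo, Set.ofPred_forall]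
  exact .biInter (Set.to_countable _) fun j _ ↦ (hg.iterate j) hA.compl

theorem measure_inter_preimage_avoidUpTo_le [MeasurableSpace X] {μ : Measure X}
    [IsFiniteMeasure μ] (hg : MeasurePreserving g μ μ) (hA : MeasurableSet A) (N k : ℕ) :
    μ (A ∩ g^[k] ⁻¹' avoidUpTo g A N) ≤ μ (avoidUpTo g A N) - μ (avoidUpTo g A (N + k)) := by
  have hmeas := measurableSet_avoidUpTo hg.measurable hA
  refine ENNReal.le_sub_of_add_le_right (measure_ne_top μ _) ?_
  have hdisj : Disjoint (A ∩ g^[k] ⁻¹' avoidUpTo g A N) (avoidUpTo g A (N + k)) :=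
    (disjoint_avoidUpTo _).mono_left Set.inter_subset_left
  calc μ (A ∩ g^[k] ⁻¹' avoidUpTo g A N) + μ (avoidUpTo g A (N + k))
      = μ ((A ∩ g^[k] ⁻¹' avoidUpTo g A N) ∪ avoidUpTo g A (N + k)) :=
        (measure_union hdisj (hmeas _)).symm
    _ ≤ μ (g^[k] ⁻¹' avoidUpTo g A N) :=
        measure_mono (Set.union_subset Set.inter_subset_right (avoidUpTo_add_subset_preimage N k))
    _ = μ (avoidUpTo g A N) := (hg.iterate k).measure_preimage (hmeas N).nullMeasurableSet

end Function

open Function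

theorem measure_no_return_small_general {X : Type*} [MeasurableSpace X]
    (μ : Measure X) [IsProbabilityMeasure μ] (g : X → X)
    (hg : MeasurePreserving g μ μ) (A : Set X) (hA : MeasurableSet A) :
    ∀ ε : ℝ, 0 < ε → ∃ N : ℕ, ∀ n : ℕ, n > N →
      μ {x ∈ A | ∀ j : ℕ, n - N ≤ j → j ≤ n → g^[j] x ∉ A} < ENNReal.ofReal ε := by
  intro ε hε
  obtain ⟨N, hN⟩ := ENNReal.exists_forall_sub_lt_of_antitone
    (fun _ _ h ↦ measure_mono (antitone_avoidUpTo h))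
    (measure_ne_top μ _) (ENNReal.ofReal_pos.mpr hε)
  refine ⟨N, fun n hn ↦ ?_⟩
  have hsub : {x ∈ A | ∀ j : ℕ, n - N ≤ j → j ≤ n → g^[j] x ∉ A} ⊆
      A ∩ g^[n - N] ⁻¹' avoidUpTo g A N := fun x ⟨hxA, hx⟩ ↦ ⟨hxA, fun i hi ↦ by
    rw [← iterate_add_apply]
    exact hx (i + (n - N)) (by omega) (by omega)⟩
  calc _ ≤ μ (A ∩ g^[n - N] ⁻¹' avoidUpTo g A N) := measure_mono hsub
    _ ≤ μ (avoidUpTo g A N) - μ (avoidUpTo g A (N + (n - N))) :=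
        measure_inter_preimage_avoidUpTo_le hg hA N (n - N)
    _ < ENNReal.ofReal ε := hN _ (by omega)

theorem measure_no_return_small {X : Type*} [MeasurableSpace X]
    (μ : Measure X) [IsProbabilityMeasure μ] (g : X → X)
    (hg : MeasurePreserving g μ μ) (A : Set X) (hA : MeasurableSet A)
    (hApos : 0 < μ A) :
    ∀ ε : ℝ, 0 < ε → ∃ N : ℕ, ∀ n : ℕ, n > N →
      μ {x ∈ A | ∀ j : ℕ, n - N ≤ j → j ≤ n → g^[j] x ∉ A} < ENNReal.ofReal ε :=
  measure_no_return_small_general μ g hg A hA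
end

section
/- Let (X,μ) be a probability space, let R ⊆ X be measurable with μ(R) > 0, and let {μ_y}_{y∈Y} be a measurable family of probability measures on R indexed by a probability space (Y, ν̂), such that μ(·∩R)/μ(R) = ∫_Y μ_y(·) dν̂(y). Let P be a finite measurable partition of R and suppose R' ⊆ R is measurable with R' a union of fibers, i.e. there is a measurable E ⊆ Y with ν̂(E) = μ(R')/μ(R) and μ_y(R') = 1 for y ∈ E, μ_y(R') = 0 for y ∉ E. Then, defining H = -∑_{P∈P} m(P) log m(P) with m(P) = ∫ μ_y(P) dν̂(y), H' similarly with the family restricted to E and renormalized, H^{fib} = ∫ (-∑_P μ_y(P) log μ_y(P)) dν̂(y), and H'^{fib} the corresponding fiberwise entropy over E, one has (H − H^{fib}) ≥ ν̂(E) · (H' − H'^{fib}). -/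
open Finset MeasureTheory

noncomputable def phi (x : ℝ) : ℝ := -x * Real.log x

lemma phi_eq : phi = Real.negMulLog := rfl

lemma abs_phi_le_one {x : ℝ} (h0 : 0 ≤ x) (h1 : x ≤ 1) : |phi x| ≤ 1 := by
  rcases eq_or_lt_of_le h0 with h | h
  · simp [phi, ← h]
  · have := Real.abs_log_mul_self_lt x h h1
    have h2 : |Real.log x * x| ≤ 1 := this.le
    calc |phi x| = |Real.log x * x| := by
          rw [show phi x = -(Real.log x * x) by rw [phi]; ring, abs_neg]
      _ ≤ 1 := h2

lemma integrable_of_bounded {Y : Type*} [MeasurableSpace Y] (ν : Measure Y)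
    [IsFiniteMeasure ν] (g : Y → ℝ) (hg : Measurable g) (C : ℝ)
    (hb : ∀ y, |g y| ≤ C) : Integrable g ν :=
  ⟨hg.aestronglyMeasurable, HasFiniteIntegral.of_bounded (C := C) (ae_of_all _ hb)⟩

/-- Jensen's inequality for `phi` on a set. -/
lemma jensen_set {Y : Type*} [MeasurableSpace Y] (ν : Measure Y) [IsFiniteMeasure ν]
    (s : Set Y) (f : Y → ℝ) (hf : Measurable f)
    (h0 : ∀ y, 0 ≤ f y) (h1 : ∀ y, f y ≤ 1) :
    ∫ y in s, phi (f y) ∂ν ≤ (ν s).toReal * phi ((∫ y in s, f y ∂ν) / (ν s).toReal) := by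
  rcases eq_or_ne (ν s) 0 with h | h
  · rw [Measure.restrict_eq_zero.mpr h]
    simp [phi]
  · haveI : NeZero (ν.restrict s) :=
      ⟨by simpa [Measure.restrict_eq_zero] using h⟩
    set c := (ν s).toReal with hc
    have hcpos : 0 < c := ENNReal.toReal_pos h (measure_ne_top ν s)
    have hfi : Integrable f (ν.restrict s) :=
      integrable_of_bounded _ f hf 1 (fun y => abs_le.mpr ⟨by linarith [h0 y], h1 y⟩)
    have hgi : Integrable (Real.negMulLog ∘ f) (ν.restrict s) :=
      integrable_of_bounded _ _ (Real.continuous_negMulLog.measurable.comp hf) 1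
        (fun y => by rw [← phi_eq]; exact abs_phi_le_one (h0 y) (h1 y))
    have hj := Real.concaveOn_negMulLog.le_map_average (μ := ν.restrict s)
      Real.continuous_negMulLog.continuousOn isClosed_Ici
      (ae_of_all _ fun y => h0 y) hfi hgi
    have huniv : (ν.restrict s) Set.univ = ν s := by simp
    rw [average_eq, average_eq, measureReal_def, huniv, smul_eq_mul, smul_eq_mul, ← hc] at hj
    have := mul_le_mul_of_nonneg_left hj hcpos.le
    rw [← mul_assoc, mul_inv_cancel₀ hcpos.ne', one_mul] at this
    calc ∫ y in s, phi (f y) ∂ν = ∫ y, (Real.negMulLog ∘ f) y ∂(ν.restrict s) := by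
          simp [phi_eq, Function.comp]
      _ ≤ c * Real.negMulLog (c⁻¹ * ∫ y, f y ∂(ν.restrict s)) := this
      _ = c * phi ((∫ y in s, f y ∂ν) / c) := by rw [phi_eq, inv_mul_eq_div]

theorem transverse_entropy_restriction
    {X Y : Type*} [MeasurableSpace X] [MeasurableSpace Y]
    (μ : Measure X) [IsProbabilityMeasure μ]
    (ν : Measure Y) [IsProbabilityMeasure ν]
    (R : Set X) (hR : MeasurableSet R) (hRpos : 0 < μ R)
    (μY : Y → Measure X) (hprob : ∀ y, IsProbabilityMeasure (μY y))
    (hsupp : ∀ y, μY y R = 1)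
    (hmeas : ∀ s : Set X, MeasurableSet s → Measurable (fun y => μY y s))
    (hdisint : ∀ s : Set X, MeasurableSet s → μ (s ∩ R) / μ R = ∫⁻ y, μY y s ∂ν)
    {ι : Type*} [Fintype ι] (P : ι → Set X)
    (hPmeas : ∀ i, MeasurableSet (P i))
    (hPdisj : Pairwise (Function.onFun Disjoint P))
    (hPcover : (⋃ i, P i) = R)
    (R' : Set X) (hR' : MeasurableSet R') (hR'R : R' ⊆ R)
    (E : Set Y) (hE : MeasurableSet E) (hEmeas : ν E = μ R' / μ R)
    (hsat : ∀ y ∈ E, μY y R' = 1) (hsat' : ∀ y ∉ E, μY y R' = 0) :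
    (∑ i, phi (∫ y, (μY y (P i)).toReal ∂ν))
        - (∫ y, ∑ i, phi ((μY y (P i)).toReal) ∂ν)
      ≥ (ν E).toReal *
        ((∑ i, phi ((∫ y in E, (μY y (P i)).toReal ∂ν) / (ν E).toReal))
          - (∫ y in E, ∑ i, phi ((μY y (P i)).toReal) ∂ν) / (ν E).toReal) := by
  classical
  set f : ι → Y → ℝ := fun i y => (μY y (P i)).toReal with hf
  have hfm : ∀ i, Measurable (f i) := fun i => (hmeas _ (hPmeas i)).ennreal_toReal
  have hf0 : ∀ i y, 0 ≤ f i y := fun i y => ENNReal.toReal_nonneg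
  have hf1 : ∀ i y, f i y ≤ 1 := by
    intro i y
    haveI := hprob y
    exact ENNReal.toReal_le_of_le_ofReal one_pos.le (by simpa using prob_le_one)
  -- cancellation helper
  have hcancel : ∀ (s : Set Y) (g : Y → ℝ),
      (ν s).toReal * ((∫ y in s, g y ∂ν) / (ν s).toReal) = ∫ y in s, g y ∂ν := by
    intro s g
    rcases eq_or_ne (ν s) 0 with h | h
    · rw [Measure.restrict_eq_zero.mpr h]; simp
    · exact mul_div_cancel₀ _ (ENNReal.toReal_pos h (measure_ne_top ν s)).ne'
  set a := (ν E).toReal with ha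
  set b := (ν Eᶜ).toReal with hb
  have hab : a + b = 1 := by
    rw [ha, hb, ← ENNReal.toReal_add (measure_ne_top _ _) (measure_ne_top _ _),
      measure_add_measure_compl hE]
    simp
  have ha0 : 0 ≤ a := ENNReal.toReal_nonneg
  have hb0 : 0 ≤ b := ENNReal.toReal_nonneg
  set IE : ι → ℝ := fun i => ∫ y in E, f i y ∂ν with hIE
  set IC : ι → ℝ := fun i => ∫ y in Eᶜ, f i y ∂ν with hIC
  have hfint : ∀ i, Integrable (f i) ν :=
    fun i => integrable_of_bounded _ _ (hfm i) 1
      (fun y => abs_le.mpr ⟨by linarith [hf0 i y], hf1 i y⟩)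
  have hsplit : ∀ i, ∫ y, f i y ∂ν = IE i + IC i :=
    fun i => (integral_add_compl hE (hfint i)).symm
  -- concavity step
  have hconc : ∀ i, a * phi (IE i / a) + b * phi (IC i / b) ≤ phi (IE i + IC i) := by
    intro i
    have hIEnn : (0:ℝ) ≤ IE i := integral_nonneg fun y => hf0 i y
    have hICnn : (0:ℝ) ≤ IC i := integral_nonneg fun y => hf0 i y
    have hx : IE i / a ∈ Set.Ici (0:ℝ) := Set.mem_Ici.mpr (div_nonneg hIEnn ha0)
    have hy : IC i / b ∈ Set.Ici (0:ℝ) := Set.mem_Ici.mpr (div_nonneg hICnn hb0)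
    have h1 := Real.concaveOn_negMulLog.2 hx hy ha0 hb0 hab
    rw [smul_eq_mul, smul_eq_mul, smul_eq_mul, smul_eq_mul] at h1
    rw [hcancel E (f i), hcancel Eᶜ (f i)] at h1
    exact h1
  -- Jensen on Eᶜ
  have hjens : ∀ i, ∫ y in Eᶜ, phi (f i y) ∂ν ≤ b * phi (IC i / b) :=
    fun i => jensen_set ν Eᶜ (f i) (hfm i) (hf0 i) (hf1 i)
  -- integrability of the summed phi
  have hphii : ∀ i, Integrable (fun y => phi (f i y)) ν :=
    fun i => integrable_of_bounded _ _
      ((Real.continuous_negMulLog.measurable).comp (hfm i)) 1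
      (fun y => abs_phi_le_one (hf0 i y) (hf1 i y))
  have hsumint : Integrable (fun y => ∑ i, phi (f i y)) ν :=
    integrable_finset_sum _ (fun i _ => hphii i)
  have hIsplit : ∫ y, ∑ i, phi (f i y) ∂ν
      = (∫ y in E, ∑ i, phi (f i y) ∂ν) + ∫ y in Eᶜ, ∑ i, phi (f i y) ∂ν :=
    (integral_add_compl hE hsumint).symm
  have hswap : ∫ y in Eᶜ, ∑ i, phi (f i y) ∂ν = ∑ i, ∫ y in Eᶜ, phi (f i y) ∂ν :=
    integral_finset_sum _ (fun i _ => (hphii i).restrict)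
  -- combine
  have key : ∑ i, phi (∫ y, f i y ∂ν)
      ≥ a * ∑ i, phi (IE i / a) + ∫ y in Eᶜ, ∑ i, phi (f i y) ∂ν := by
    rw [hswap, mul_sum, ← sum_add_distrib]
    apply Finset.sum_le_sum
    intro i _
    rw [hsplit i]
    calc a * phi (IE i / a) + ∫ y in Eᶜ, phi (f i y) ∂ν
        ≤ a * phi (IE i / a) + b * phi (IC i / b) := by linarith [hjens i]
      _ ≤ phi (IE i + IC i) := hconc i
  have hrhs : a * ((∑ i, phi (IE i / a)) - (∫ y in E, ∑ i, phi (f i y) ∂ν) / a)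
      = a * ∑ i, phi (IE i / a) - ∫ y in E, ∑ i, phi (f i y) ∂ν := by
    rw [mul_sub, hcancel E (fun y => ∑ i, phi (f i y))]
  rw [ge_iff_le]
  calc a * ((∑ i, phi (IE i / a)) - (∫ y in E, ∑ i, phi (f i y) ∂ν) / a)
      = a * ∑ i, phi (IE i / a) - ∫ y in E, ∑ i, phi (f i y) ∂ν := hrhs
    _ ≤ (∑ i, phi (∫ y, f i y ∂ν)) - ∫ y, ∑ i, phi (f i y) ∂ν := by
        rw [hIsplit]; linarith [key]
end
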